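/- For any unit vector α ∈ ℝ³ and any θ ∈ ℝ, set η := cos(θ/2) and ε := sin(θ/2)·α. If η ≠ 0, then the matrix E at the Rodrigues matrix admits the quaternion representation E(R(α,θ)) = (1/|η|)·(η²·I + η·ε^×). -/

import Mathlib

open Matrix

noncomputable section

/-- The cross (hat) map: `x^×` with `x^× y = x × y`. -/
def cross3 (x : Fin 3 → ℝ) : Matrix (Fin 3) (Fin 3) ℝ :=
  !![0, -x 2, x 1; x 2, 0, -x 0; -x 1, x 0, 0]

/-- The vee map: `A∨ = (A₃₂, A₁₃, A₂₁)`. -/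
def vee3 (A : Matrix (Fin 3) (Fin 3) ℝ) : Fin 3 → ℝ :=
  ![A 2 1, A 0 2, A 1 0]

/-- The Rodrigues matrix `R(α,θ) = I + sin θ · α^× + (1-cos θ) · α^×α^×`. -/
def rod (α : Fin 3 → ℝ) (θ : ℝ) : Matrix (Fin 3) (Fin 3) ℝ :=
  1 + Real.sin θ • cross3 α + (1 - Real.cos θ) • (cross3 α * cross3 α)

/-- The error vector `ψ(R) = ½(R - Rᵀ)∨`. -/
def psi3 (R : Matrix (Fin 3) (Fin 3) ℝ) : Fin 3 → ℝ :=
  (1 / 2 : ℝ) • vee3 (R - Rᵀ)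

/-- The generalized error vector `e_R(R) = (1/√(1+tr R)) (R - Rᵀ)∨`. -/
def eR (R : Matrix (Fin 3) (Fin 3) ℝ) : Fin 3 → ℝ :=
  (1 / Real.sqrt (1 + R.trace)) • vee3 (R - Rᵀ)

/-- `E_c(R) = ½((tr R)·I - Rᵀ)`. -/
def Ec (R : Matrix (Fin 3) (Fin 3) ℝ) : Matrix (Fin 3) (Fin 3) ℝ :=
  (1 / 2 : ℝ) • (R.trace • (1 : Matrix (Fin 3) (Fin 3) ℝ) - Rᵀ)

/-- `E(R) = (1/√(1+tr R))(2E_c(R) + ½ e_R e_Rᵀ)`. -/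
def Emat (R : Matrix (Fin 3) (Fin 3) ℝ) : Matrix (Fin 3) (Fin 3) ℝ :=
  (1 / Real.sqrt (1 + R.trace)) •
    ((2 : ℝ) • Ec R + (1 / 2 : ℝ) • vecMulVec (eR R) (eR R))

/-! For a unit vector `α`, `α^× α^× = α αᵀ - I`, so
`R(α,θ) = cos θ I + sin θ α^× + (1 - cos θ) α αᵀ`. Hence `1 + tr R = 4 cos² (θ/2)` and
`e_R = (sin θ / |cos (θ/2)|) α`; the `α αᵀ` parts of `2 E_c` and `½ e_R e_Rᵀ` then cancel, leaving
`E = ((1 + cos θ) I + sin θ α^×) / (2 |cos (θ/2)|)`, which the half-angle formulas turn into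
the quaternion form. -/

section Hat

variable (x : Fin 3 → ℝ)

theorem cross3_smul (a : ℝ) : cross3 (a • x) = a • cross3 x := by
  ext i j
  fin_cases i <;> fin_cases j <;> simp [cross3]

theorem transpose_cross3 : (cross3 x)ᵀ = -cross3 x := by
  ext i j
  fin_cases i <;> fin_cases j <;> simp [cross3]

theorem vee3_cross3 : vee3 (cross3 x) = x := by
  ext i
  fin_cases i <;> simp [vee3, cross3]

theorem trace_cross3 : (cross3 x).trace = 0 := by
  simp [Matrix.trace, cross3, Fin.sum_univ_three]

theorem cross3_mul_cross3 : cross3 x * cross3 x = vecMulVec x x - (x ⬝ᵥ x) • 1 := by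
  ext i j
  fin_cases i <;> fin_cases j <;>
    simp [cross3, vecMulVec, dotProduct, Matrix.mul_apply, Fin.sum_univ_three] <;> ring

end Hat

theorem one_add_cos_eq_two_mul_cos_half_sq (θ : ℝ) :
    1 + Real.cos θ = 2 * Real.cos (θ / 2) ^ 2 := by
  rw [Real.cos_sq, show 2 * (θ / 2) = θ by ring]
  ring

theorem sin_eq_two_mul_sin_half_mul_cos_half (θ : ℝ) :
    Real.sin θ = 2 * Real.sin (θ / 2) * Real.cos (θ / 2) := by
  rw [← Real.sin_two_mul, show 2 * (θ / 2) = θ by ring]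

section Rodrigues

variable (α : Fin 3 → ℝ) (θ : ℝ)

theorem rod_sub_transpose : rod α θ - (rod α θ)ᵀ = (2 * Real.sin θ) • cross3 α := by
  simp only [rod, transpose_add, transpose_smul, transpose_one, transpose_mul, transpose_cross3,
    neg_mul_neg]
  module

variable {α}

theorem rod_eq_of_dotProduct_self_eq_one (hα : α ⬝ᵥ α = 1) :
    rod α θ = Real.cos θ • 1 + Real.sin θ • cross3 α + (1 - Real.cos θ) • vecMulVec α α := by
  rw [rod, cross3_mul_cross3, hα]
  module

theorem trace_rod (hα : α ⬝ᵥ α = 1) : (rod α θ).trace = 1 + 2 * Real.cos θ := by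
  rw [rod_eq_of_dotProduct_self_eq_one θ hα]
  simp only [trace_add, trace_smul, trace_one, Fintype.card_fin, Nat.cast_ofNat, smul_eq_mul,
    trace_cross3, trace_vecMulVec, hα]
  ring

theorem sqrt_one_add_trace_rod (hα : α ⬝ᵥ α = 1) :
    √(1 + (rod α θ).trace) = 2 * |Real.cos (θ / 2)| := by
  rw [trace_rod θ hα, ← add_assoc, one_add_one_eq_two, ← mul_one_add,
    one_add_cos_eq_two_mul_cos_half_sq, ← mul_assoc, show (2 : ℝ) * 2 = 2 ^ 2 by norm_num,
    ← mul_pow, Real.sqrt_sq_eq_abs, abs_mul, abs_two]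

theorem eR_rod (hα : α ⬝ᵥ α = 1) : eR (rod α θ) = (Real.sin θ / |Real.cos (θ / 2)|) • α := by
  rw [eR, sqrt_one_add_trace_rod θ hα, rod_sub_transpose, ← cross3_smul, vee3_cross3, smul_smul]
  congr 1
  field_simp

theorem vecMulVec_eR_rod (hα : α ⬝ᵥ α = 1) (hc : Real.cos (θ / 2) ≠ 0) :
    vecMulVec (eR (rod α θ)) (eR (rod α θ)) = (2 * (1 - Real.cos θ)) • vecMulVec α α := by
  rw [eR_rod θ hα, smul_vecMulVec, vecMulVec_smul, smul_smul]
  congr 1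
  rw [sin_eq_two_mul_sin_half_mul_cos_half, div_mul_div_comm, abs_mul_abs_self]
  field_simp
  linear_combination 2 * Real.sin_sq_add_cos_sq (θ / 2) + one_add_cos_eq_two_mul_cos_half_sq θ

theorem two_smul_Ec_rod (hα : α ⬝ᵥ α = 1) :
    (2 : ℝ) • Ec (rod α θ) =
      (1 + Real.cos θ) • 1 + Real.sin θ • cross3 α - (1 - Real.cos θ) • vecMulVec α α := by
  rw [Ec, trace_rod θ hα, rod_eq_of_dotProduct_self_eq_one θ hα]
  simp only [transpose_add, transpose_smul, transpose_one, transpose_cross3, transpose_vecMulVec]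
  module

theorem Emat_rod (hα : α ⬝ᵥ α = 1) (hc : Real.cos (θ / 2) ≠ 0) :
    Emat (rod α θ) =
      (1 / (2 * |Real.cos (θ / 2)|)) • ((1 + Real.cos θ) • 1 + Real.sin θ • cross3 α) := by
  rw [Emat, sqrt_one_add_trace_rod θ hα, two_smul_Ec_rod θ hα, vecMulVec_eR_rod θ hα hc]
  module

end Rodrigues

/-- quaternion representation of `E` at the Rodrigues matrix. -/
theorem Emat_rodrigues_quat (α : Fin 3 → ℝ)
    (hα : α 0 ^ 2 + α 1 ^ 2 + α 2 ^ 2 = 1) (θ : ℝ)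
    (η : ℝ) (ε : Fin 3 → ℝ)
    (hη : η = Real.cos (θ / 2)) (hε : ε = Real.sin (θ / 2) • α) (hηne : η ≠ 0) :
    Emat (rod α θ) =
      (1 / |η|) • (η ^ 2 • (1 : Matrix (Fin 3) (Fin 3) ℝ) + η • cross3 ε) := by
  have hα' : α ⬝ᵥ α = 1 := by
    simpa [dotProduct, Fin.sum_univ_three, ← sq, add_assoc] using hα
  subst hη hε
  rw [Emat_rod θ hα' hηne, one_add_cos_eq_two_mul_cos_half_sq,
    sin_eq_two_mul_sin_half_mul_cos_half, cross3_smul]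
  module
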